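/- arXiv:1211.5982 — 6 statements merged into one kernel-verified Lean document; each statement's English description precedes it below -/
import Mathlib

section
/- If g is an isometry of U_1 that is not the identity, then some finite product of conjugates of g moves some element of U_1 by distance exactly 1. -/
/-- A metric space is a bounded Urysohn space of diameter 1 if it is complete, separable,
has diameter at most 1, is homogeneous (every isometry between finite subsets extends to a
global surjective isometry), and embeds every finite metric space of diameter at most 1. -/
structure IsUrysohnOne (X : Type) [MetricSpace X] : Prop where
  complete : CompleteSpace X
  separable : TopologicalSpace.SeparableSpace X
  diam_le_one : ∀ x y : X, dist x y ≤ 1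
  homogeneous : ∀ (s : Finset X) (f : X → X),
    (∀ x ∈ s, ∀ y ∈ s, dist (f x) (f y) = dist x y) →
    ∃ g : X ≃ᵢ X, ∀ x ∈ s, g x = f x
  universal : ∀ (Y : Type) [MetricSpace Y] [Finite Y],
    (∀ y z : Y, dist y z ≤ 1) → ∃ f : Y → X, Isometry f

/-- `A` and `C` are independent over `B`. -/
def Indep {X : Type} [MetricSpace X] (A B C : Set X) : Prop :=
  ∀ a ∈ A, ∀ c ∈ C, dist a c < 1 → ∃ b ∈ B, dist a c = dist a b + dist b c

/-- The distance of the type `tp a / S`. -/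
noncomputable def typeDist {X : Type} [MetricSpace X] (a : X) (S : Finset X)
    (hS : S.Nonempty) : ℝ := S.inf' hS (fun b => dist a b)

/-- `x` realises the type of `a` over `S`. -/
def Realises {X : Type} [MetricSpace X] (x a : X) (S : Finset X) : Prop :=
  ∀ b ∈ S, dist x b = dist a b

/-- `g` moves the type of `a` over `S` almost maximally. -/
def MovesAlmostMax {X : Type} [MetricSpace X] (g : X ≃ᵢ X) (a : X) (S : Finset X) : Prop :=
  ∃ x : X, Realises x a S ∧ Indep {x} (↑S) {g x}

/-- `g` moves the type of `a` over `S` by distance `C`. -/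
def MovesBy {X : Type} [MetricSpace X] (g : X ≃ᵢ X) (a : X) (S : Finset X) (C : ℝ) : Prop :=
  ∃ x : X, Realises x a S ∧ C ≤ dist x (g x)

/-- `k` is a conjugate of `g` or of `g⁻¹`. -/
def IsConjOfOrInv {G : Type} [Group G] (g k : G) : Prop :=
  ∃ h : G, k = h * g * h⁻¹ ∨ k = h * g⁻¹ * h⁻¹

/-! Pick `a` with `g a ≠ a`, put `ε = dist a (g a)` and choose `n` with `n ε ≥ 1`. By universality
`U_1` contains points `p 0, …, p n` with `dist (p i) (p j) = min 1 (|i - j| ε)`. Consecutive points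
are at distance `ε`, so by homogeneity some conjugate of `g` maps `p m` to `p (m + 1)`; the product
of these conjugates maps `p 0` to `p n`, which is at distance `min 1 (n ε) = 1`. -/

lemma min_one_add_le_add_min_one {a b : ℝ} (ha : 0 ≤ a) (hb : 0 ≤ b) :
    min 1 (a + b) ≤ min 1 a + min 1 b := by
  simp only [min_def]
  split_ifs <;> linarith

@[reducible]
noncomputable def chainMetric (n : ℕ) {ε : ℝ} (hε : 0 < ε) : MetricSpace (Fin (n + 1)) where
  dist i j := min 1 (|(i : ℝ) - j| * ε)
  dist_self i := by simp
  dist_comm i j := by simp only [abs_sub_comm]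
  dist_triangle i j k :=
    calc min 1 (|(i : ℝ) - k| * ε)
        ≤ min 1 (|(i : ℝ) - j| * ε + |(j : ℝ) - k| * ε) := by
          gcongr; rw [← add_mul]; gcongr; exact abs_sub_le _ _ _
      _ ≤ _ := min_one_add_le_add_min_one (by positivity) (by positivity)
  eq_of_dist_eq_zero {i j} h := by
    have : |(i : ℝ) - j| * ε = 0 := by
      rcases min_choice 1 (|(i : ℝ) - j| * ε) with h' | h' <;> simp_all
    have : (i : ℝ) = j := by simpa [hε.ne', sub_eq_zero] using this
    exact Fin.ext (by exact_mod_cast this)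

lemma chainMetric_dist (n : ℕ) {ε : ℝ} (hε : 0 < ε) (i j : Fin (n + 1)) :
    (chainMetric n hε).dist i j = min 1 (|(i : ℝ) - j| * ε) := rfl

lemma IsUrysohnOne.exists_chain {X : Type} [MetricSpace X] (hX : IsUrysohnOne X)
    {ε : ℝ} (hε : 0 < ε) (n : ℕ) :
    ∃ p : ℕ → X, ∀ i ≤ n, ∀ j ≤ n, dist (p i) (p j) = min 1 (|(i : ℝ) - j| * ε) := by
  let _ : MetricSpace (Fin (n + 1)) := chainMetric n hε
  obtain ⟨f, hf⟩ := hX.universal (Fin (n + 1)) fun i j => min_le_left _ _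
  refine ⟨fun i => f (Fin.ofNat (n + 1) i), fun i hi j hj => ?_⟩
  rw [hf.dist_eq, chainMetric_dist, Fin.val_ofNat, Fin.val_ofNat, Nat.mod_eq_of_lt (by omega),
    Nat.mod_eq_of_lt (by omega)]

lemma IsUrysohnOne.exists_conj_apply_eq {X : Type} [MetricSpace X] (hX : IsUrysohnOne X)
    (g : X ≃ᵢ X) {a p q : X} (hpq : dist p q = dist a (g a)) :
    ∃ h : X ≃ᵢ X, (h * g * h⁻¹) p = q := by
  classical
  obtain ⟨h, hh⟩ := hX.homogeneous {a, g a} (fun y => if y = a then p else q) (by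
    intro x hx y hy
    simp only [Finset.mem_insert, Finset.mem_singleton] at hx hy
    rcases hx with rfl | rfl <;> rcases hy with rfl | rfl <;> split_ifs <;>
      simp_all [dist_comm])
  have hha : h a = p := by simpa using hh a (by simp)
  refine ⟨h, ?_⟩
  rw [IsometryEquiv.mul_apply, IsometryEquiv.mul_apply, ← hha, h.inv_apply_self,
    hh (g a) (by simp)]
  split_ifs with hga
  · simpa [hga] using hpq
  · rfl

lemma Submonoid.exists_mem_apply_eq_of_chain {X : Type} [PseudoEMetricSpace X]
    (M : Submonoid (X ≃ᵢ X)) (p : ℕ → X) {n : ℕ}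
    (hstep : ∀ m < n, ∃ k ∈ M, k (p m) = p (m + 1)) : ∃ k ∈ M, k (p 0) = p n := by
  induction n with
  | zero => exact ⟨1, M.one_mem, rfl⟩
  | succ n ih =>
    obtain ⟨k, hkM, hk⟩ := ih fun m hm => hstep m (by omega)
    obtain ⟨k', hk'M, hk'⟩ := hstep n (by omega)
    exact ⟨k' * k, M.mul_mem hk'M hkM, by rw [IsometryEquiv.mul_apply, hk, hk']⟩

theorem product_of_conjugates_moves_by_one (X : Type) [MetricSpace X]
    (hX : IsUrysohnOne X) (g : X ≃ᵢ X) (hg : g ≠ 1) :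
    ∃ l : List (X ≃ᵢ X), (∀ k ∈ l, ∃ h : X ≃ᵢ X, k = h * g * h⁻¹) ∧
      ∃ x : X, dist x (l.prod x) = 1 := by
  obtain ⟨a, ha⟩ : ∃ a, g a ≠ a := by
    by_contra! h
    exact hg (IsometryEquiv.ext h)
  set ε := dist a (g a)
  have hε : 0 < ε := dist_pos.mpr (Ne.symm ha)
  obtain ⟨n, hn⟩ : ∃ n : ℕ, 1 / ε ≤ n := exists_nat_ge _
  have hnε : 1 ≤ n * ε := by rwa [div_le_iff₀ hε] at hn
  obtain ⟨p, hp⟩ := hX.exists_chain hε n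
  have hstep : ∀ m < n, ∃ k ∈ Submonoid.closure {k | ∃ h : X ≃ᵢ X, k = h * g * h⁻¹},
      k (p m) = p (m + 1) := by
    intro m hm
    obtain ⟨h, hh⟩ := hX.exists_conj_apply_eq g (a := a) (p := p m) (q := p (m + 1)) (by
      rw [hp m hm.le (m + 1) hm, Nat.cast_succ, sub_add_cancel_left, abs_neg, abs_one, one_mul]
      exact min_eq_right (hX.diam_le_one a (g a)))
    exact ⟨_, Submonoid.subset_closure ⟨h, rfl⟩, hh⟩
  obtain ⟨k, hk, hkp⟩ := Submonoid.exists_mem_apply_eq_of_chain _ p hstep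
  obtain ⟨l, hl, rfl⟩ := Submonoid.exists_list_of_mem_closure hk
  refine ⟨l, hl, p 0, ?_⟩
  rw [hkp, hp 0 n.zero_le n le_rfl]
  simpa using hnε
end

section
/- Let g be an isometry of U_1 such that d(a, g(a)) = 1 for some point a. Then for every finite subset A of U_1 there exists a point x with d(x, A) = 1 and d(x, g(x)) ≥ 1/2, where d(x,A) denotes the minimum distance from x to points of A. -/
section Katetov

variable {X : Type} [MetricSpace X]

/-- `none` is the new point, at distance `f u` from each `u ∈ S`. -/
noncomputable def katetovDist (S : Set X) (f : X → ℝ) : Option S → Option S → ℝ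
  | some u, some v => dist (u : X) v
  | some u, none => f u
  | none, some v => f v
  | none, none => 0

noncomputable abbrev katetovMetricSpace (S : Set X) (f : X → ℝ) (hpos : ∀ u ∈ S, 0 < f u)
    (hlip : ∀ u ∈ S, ∀ v ∈ S, |f u - f v| ≤ dist u v)
    (hsum : ∀ u ∈ S, ∀ v ∈ S, dist u v ≤ f u + f v) : MetricSpace (Option S) where
  dist := katetovDist S f
  dist_self := by rintro (_ | u) <;> simp [katetovDist]
  dist_comm := by rintro (_ | u) (_ | v) <;> simp [katetovDist, dist_comm]
  dist_triangle := by
    rintro (_ | u) (_ | v) (_ | w) <;> simp only [katetovDist]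
    · simp
    · simp
    · linarith [hpos v v.2]
    · linarith [(abs_le.1 (hlip v v.2 w w.2)).1]
    · simp
    · exact hsum u u.2 w w.2
    · linarith [(abs_le.1 (hlip u u.2 v v.2)).2]
    · exact dist_triangle (u : X) v w
  eq_of_dist_eq_zero := by
    rintro (_ | u) (_ | v) h <;> simp only [katetovDist] at h
    · rfl
    · exact absurd h (hpos v v.2).ne'
    · exact absurd h (hpos u u.2).ne'
    · exact congrArg some (Subtype.ext (dist_eq_zero.1 h))

end Katetov

theorem Isometry.dist_sub_dist_le {X : Type} [MetricSpace X] {g : X → X} (hg : Isometry g)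
    (x p : X) : dist x (g p) - dist x p ≤ dist x (g x) := by
  have := dist_triangle x (g x) (g p)
  rw [hg.dist_eq] at this
  linarith

namespace IsUrysohnOne

variable {X : Type} [MetricSpace X]

theorem exists_dist_eq (hX : IsUrysohnOne X) (S : Finset X) (f : X → ℝ)
    (hpos : ∀ u ∈ S, 0 < f u) (hle : ∀ u ∈ S, f u ≤ 1)
    (hlip : ∀ u ∈ S, ∀ v ∈ S, |f u - f v| ≤ dist u v)
    (hsum : ∀ u ∈ S, ∀ v ∈ S, dist u v ≤ f u + f v) :
    ∃ x : X, ∀ u ∈ S, dist x u = f u := by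
  classical
  let := katetovMetricSpace (S : Set X) f hpos hlip hsum
  have hdiam : ∀ y z : Option (S : Set X), dist y z ≤ 1 := by
    rintro (_ | u) (_ | v)
    · exact zero_le_one
    · exact hle v v.2
    · exact hle u u.2
    · exact hX.diam_le_one u v
  obtain ⟨φ, hφ⟩ := hX.universal _ hdiam
  set e : ↥(S : Set X) → X := fun u => φ (some u)
  have he : e.Injective := hφ.injective.comp (Option.some_injective _)
  -- `ψ` sends the copy `e u` of `u ∈ S` back to `u`; homogeneity extends it to an isometry.
  set ψ : X → X := Function.extend e Subtype.val id
  have hψ : ∀ u, ψ (e u) = u := he.extend_apply _ _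
  obtain ⟨h, hh⟩ := hX.homogeneous (Finset.univ.image e) ψ (by
    simp only [Finset.mem_image, Finset.mem_univ, true_and]
    rintro _ ⟨u, rfl⟩ _ ⟨v, rfl⟩
    rw [hψ, hψ, hφ.dist_eq]
    rfl)
  refine ⟨h (φ none), fun u hu => ?_⟩
  have hu' : h (e ⟨u, hu⟩) = u := by
    rw [hh _ (Finset.mem_image_of_mem _ (Finset.mem_univ _)), hψ]
  conv_lhs => rw [← hu', h.dist_eq, hφ.dist_eq]
  rfl

/-- `u ↦ min 1 (d(u, p) + r)` is a Katětov function. -/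
theorem exists_dist_eq_min_add (hX : IsUrysohnOne X) (p : X) {r : ℝ} (hr : 0 < r)
    (S : Finset X) : ∃ x : X, ∀ u ∈ S, dist x u = min 1 (dist u p + r) := by
  refine hX.exists_dist_eq S _ (fun u _ => lt_min one_pos (by positivity))
    (fun u _ => min_le_left _ _) (fun u _ v _ => ?_) (fun u _ v _ => ?_)
  · calc |min 1 (dist u p + r) - min 1 (dist v p + r)|
        ≤ max |1 - 1| |dist u p + r - (dist v p + r)| := abs_min_sub_min_le_max _ _ _ _
      _ ≤ dist u v := by
        rw [sub_self, abs_zero, add_sub_add_right_eq_sub]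
        exact max_le dist_nonneg (abs_dist_sub_le u v p)
  · have := hX.diam_le_one u v
    have := dist_triangle_right u v p
    rcases min_choice 1 (dist u p + r) with h | h <;>
      rcases min_choice 1 (dist v p + r) with h' | h' <;> rw [h, h'] <;>
      linarith [dist_nonneg (x := u) (y := p), dist_nonneg (x := v) (y := p)]

theorem exists_half_moved (hX : IsUrysohnOne X) (g : X ≃ᵢ X) (p : X)
    (hp : 1 / 2 ≤ dist p (g p)) (A : Finset X) :
    ∃ x : X, 1 / 2 ≤ dist x (g x) ∧ ∀ b ∈ A, dist x b = min 1 (dist b p + 1 / 2) := by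
  classical
  obtain ⟨x, hx⟩ := hX.exists_dist_eq_min_add p one_half_pos (insert p (insert (g p) A))
  have hxp : dist x p = 1 / 2 := by
    rw [hx p (by simp), dist_self, zero_add]
    norm_num
  have hxgp : dist x (g p) = 1 := by
    rw [hx (g p) (by simp), dist_comm]
    exact min_eq_left (by linarith)
  refine ⟨x, ?_, fun b hb => hx b (by simp [hb])⟩
  linarith [g.isometry.dist_sub_dist_le x p]

end IsUrysohnOne

theorem exists_far_point_moved (X : Type) [MetricSpace X]
    (hX : IsUrysohnOne X) (g : X ≃ᵢ X) (a : X) (ha : dist a (g a) = 1)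
    (A : Finset X) (hA : A.Nonempty) :
    ∃ x : X, A.inf' hA (fun y => dist x y) = 1 ∧ 1/2 ≤ dist x (g x) := by
  obtain ⟨y, hy, hyA⟩ := hX.exists_half_moved g a (by rw [ha]; norm_num) A
  obtain ⟨x, hx, hxA⟩ := hX.exists_half_moved g y hy A
  refine ⟨x, Finset.inf'_eq_of_forall hA _ fun b hb => ?_, hx⟩
  have hyb : 1 / 2 ≤ dist b y := by
    rw [dist_comm, hyA b hb]
    exact le_min (by norm_num) (by linarith [dist_nonneg (x := b) (y := a)])
  rw [hxA b hb]
  exact min_eq_left (by linarith)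
end

section
/- In U_1, transitivity of independence holds: for finite sets B ⊆ B' and points/sets A, C, if A is independent from B' over B and A is independent from C over B', then A is independent from C over B. -/
/-! Independence over `B` says that every pair at distance `< 1` has a point of `B` on a
geodesic between them. A point `b'` between `a` and `c`, and a point `b` between `a` and `b'`,
make `b` lie between `a` and `c`; since `dist a b' ≤ dist a c < 1`, the first independence
applies to `a` and `b'`. -/

theorem dist_eq_add_of_between_of_between {X : Type} [PseudoMetricSpace X] {a b b' c : X}
    (hb' : dist a c = dist a b' + dist b' c) (hb : dist a b' = dist a b + dist b b') :
    dist a c = dist a b + dist b c := by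
  refine le_antisymm (dist_triangle a b c) ?_
  calc dist a b + dist b c ≤ dist a b + (dist b b' + dist b' c) := by
        gcongr; exact dist_triangle b b' c
    _ = dist a c := by rw [hb', hb]; ring

theorem indep_trans_general (X : Type) [MetricSpace X]
    (A C : Set X) (B B' : Finset X)
    (h1 : Indep A (↑B) (↑B')) (h2 : Indep A (↑B') C) :
    Indep A (↑B) C := by
  intro a ha c hc hac
  obtain ⟨b', hb'B', hb'⟩ := h2 a ha c hc hac
  have hab' : dist a b' < 1 := by
    linarith [dist_nonneg (x := b') (y := c)]
  obtain ⟨b, hbB, hb⟩ := h1 a ha b' hb'B' hab'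
  exact ⟨b, hbB, dist_eq_add_of_between_of_between hb' hb⟩

theorem indep_trans (X : Type) [MetricSpace X] (hX : IsUrysohnOne X)
    (A C : Set X) (B B' : Finset X) (hBB' : B ⊆ B')
    (h1 : Indep A (↑B) (↑B')) (h2 : Indep A (↑B') C) :
    Indep A (↑B) C :=
  indep_trans_general X A C B B' h1 h2
end

section
/- In U_1, existence of independent realisations holds: for every point a and finite sets B ⊆ C, there exists a point a' with the same type as a over B (i.e., d(a', b) = d(a, b) for all b ∈ B, and a' in the same orbit over B) such that a' is independent from C over B. -/
/-! Take for `a'` the point of the free amalgam of `a` and `C` over `B`, with distances truncated at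
`1`: `d(a', c) = min (1, min_{b ∈ B} d(a, b) + d(b, c))`. For `a ∉ B` this is a positive Katětov
function on `C` bounded by `1`, so by universality the one-point extension of `C` embeds into `U_1`,
and homogeneity moves the embedded copy of `C` back onto `C`. Every distance `d(a', c) < 1` then
passes through some `b ∈ B` by construction, and homogeneity once more gives the isometry fixing `B`
that sends `a` to `a'`. -/

section Katetov

variable {X : Type} [MetricSpace X]

structure IsKatetovOn (f : X → ℝ) (C : Set X) : Prop where
  le_add_dist : ∀ x ∈ C, ∀ y ∈ C, f x ≤ f y + dist x y
  dist_le_add : ∀ x ∈ C, ∀ y ∈ C, dist x y ≤ f x + f y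

/-- The metric on `C` with one new point `none` at distance `f c` from each `c ∈ C`. -/
@[reducible]
def IsKatetovOn.extension {f : X → ℝ} {C : Set X} (hf : IsKatetovOn f C)
    (hpos : ∀ c ∈ C, 0 < f c) : MetricSpace (Option C) where
  dist
    | some c, some c' => dist (c : X) c'
    | some c, none | none, some c => f c
    | none, none => 0
  dist_self := by rintro (_ | c) <;> simp
  dist_comm := by rintro (_ | c) (_ | c') <;> simp [dist_comm]
  dist_triangle := by
    rintro (_ | ⟨x, hx⟩) (_ | ⟨y, hy⟩) (_ | ⟨z, hz⟩) <;> simp only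
    · norm_num
    · linarith [hpos z hz]
    · linarith [hpos y hy]
    · linarith [hf.le_add_dist z hz y hy, dist_comm y z]
    · linarith [hpos x hx]
    · exact hf.dist_le_add x hx z hz
    · linarith [hf.le_add_dist x hx y hy]
    · exact dist_triangle x y z
  eq_of_dist_eq_zero := by
    rintro (_ | ⟨x, hx⟩) (_ | ⟨y, hy⟩) h <;> simp only at h
    · rfl
    · exact absurd h (hpos y hy).ne'
    · exact absurd h (hpos x hx).ne'
    · exact congrArg some (Subtype.ext (dist_eq_zero.mp h))

end Katetov

section FreeDist

variable {X : Type} [MetricSpace X]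

-- The element `1` both truncates the distances and gives the value for `B = ∅`.
noncomputable def freeDist (a : X) (B : Finset X) (c : X) : ℝ :=
  (insert 1 (B.image fun b => dist a b + dist b c)).min' (Finset.insert_nonempty _ _)

variable {a b : X} {B : Finset X}

theorem freeDist_le_one (c : X) : freeDist a B c ≤ 1 :=
  Finset.min'_le _ _ (Finset.mem_insert_self _ _)

theorem freeDist_le_dist_add_dist (hb : b ∈ B) (c : X) :
    freeDist a B c ≤ dist a b + dist b c :=
  Finset.min'_le _ _ (Finset.mem_insert_of_mem (Finset.mem_image_of_mem _ hb))

theorem le_freeDist {r : ℝ} {c : X} (h1 : r ≤ 1) (hB : ∀ b ∈ B, r ≤ dist a b + dist b c) :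
    r ≤ freeDist a B c := by
  refine Finset.le_min' _ _ _ fun s hs => ?_
  rcases Finset.mem_insert.mp hs with rfl | hs
  · exact h1
  · obtain ⟨b, hb, rfl⟩ := Finset.mem_image.mp hs
    exact hB b hb

theorem freeDist_eq_one_or (a : X) (B : Finset X) (c : X) :
    freeDist a B c = 1 ∨ ∃ b ∈ B, freeDist a B c = dist a b + dist b c := by
  have := Finset.min'_mem (insert 1 (B.image fun b => dist a b + dist b c))
    (Finset.insert_nonempty _ _)
  rcases Finset.mem_insert.mp this with h | h
  · exact Or.inl h
  · obtain ⟨b, hb, h⟩ := Finset.mem_image.mp h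
    exact Or.inr ⟨b, hb, h.symm⟩

theorem freeDist_pos (haB : a ∉ B) (c : X) : 0 < freeDist a B c := by
  rcases freeDist_eq_one_or a B c with h | ⟨b, hb, h⟩
  · rw [h]; exact one_pos
  · rw [h]
    have : 0 < dist a b := dist_pos.mpr fun hab => haB (hab ▸ hb)
    positivity

theorem freeDist_le_freeDist_add_dist (c c' : X) :
    freeDist a B c ≤ freeDist a B c' + dist c c' := by
  rcases freeDist_eq_one_or a B c' with h | ⟨b, hb, h⟩
  · linarith [freeDist_le_one (a := a) (B := B) c, dist_nonneg (x := c) (y := c')]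
  · linarith [freeDist_le_dist_add_dist (a := a) hb c, dist_triangle_right b c c']

theorem dist_le_freeDist (hdiam : ∀ x y : X, dist x y ≤ 1) (c : X) : dist a c ≤ freeDist a B c :=
  le_freeDist (hdiam a c) fun b _ => dist_triangle a b c

theorem freeDist_eq_dist_of_mem (hdiam : ∀ x y : X, dist x y ≤ 1) (hb : b ∈ B) :
    freeDist a B b = dist a b :=
  le_antisymm (by simpa using freeDist_le_dist_add_dist hb b) (dist_le_freeDist hdiam b)

theorem isKatetovOn_freeDist (hdiam : ∀ x y : X, dist x y ≤ 1) (C : Set X) :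
    IsKatetovOn (freeDist a B) C where
  le_add_dist x _ y _ := freeDist_le_freeDist_add_dist x y
  dist_le_add x _ y _ := by
    linarith [dist_le_freeDist hdiam (a := a) (B := B) x, dist_le_freeDist hdiam (a := a) (B := B) y,
      dist_triangle_left x y a]

end FreeDist

theorem indep_of_forall_dist_eq_freeDist {X : Type} [MetricSpace X] {a x : X} {B C : Finset X}
    (hB : Realises x a B) (hC : ∀ c ∈ C, dist x c = freeDist a B c) : Indep {x} B C := by
  rintro x' rfl c hc hlt
  rcases freeDist_eq_one_or a B c with h | ⟨b, hb, h⟩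
  · rw [hC c hc, h] at hlt
    exact absurd hlt (lt_irrefl 1)
  · exact ⟨b, hb, by rw [hC c hc, h, hB b hb]⟩

namespace IsUrysohnOne

variable {X : Type} [MetricSpace X]

theorem exists_forall_dist_eq (hX : IsUrysohnOne X) {f : X → ℝ} {C : Finset X}
    (hf : IsKatetovOn f C) (hpos : ∀ c ∈ C, 0 < f c) (hle : ∀ c ∈ C, f c ≤ 1) :
    ∃ x : X, ∀ c ∈ C, dist x c = f c := by
  classical
  let _ := hf.extension hpos
  obtain ⟨e, he⟩ := hX.universal (Option (C : Set X)) (by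
    rintro (_ | ⟨y, hy⟩) (_ | ⟨z, hz⟩)
    · exact zero_le_one
    · exact hle z hz
    · exact hle y hy
    · exact hX.diam_le_one y z)
  let φ : X → X := fun x => if h : x ∈ C then e (some ⟨x, h⟩) else x
  obtain ⟨g, hg⟩ := hX.homogeneous C φ fun x hx y hy => by
    simp only [φ, dif_pos hx, dif_pos hy, he.dist_eq]
    rfl
  refine ⟨g.symm (e none), fun c hc => ?_⟩
  rw [← g.dist_eq, g.apply_symm_apply, hg c hc]
  simp only [φ, dif_pos hc, he.dist_eq]
  rfl

theorem exists_isometryEquiv_of_realises (hX : IsUrysohnOne X) {a a' : X} {B : Finset X}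
    (h : Realises a' a B) : ∃ g : X ≃ᵢ X, (∀ b ∈ B, g b = b) ∧ g a = a' := by
  classical
  let ψ : X → X := fun x => if x ∈ B then x else a'
  obtain ⟨g, hg⟩ := hX.homogeneous (insert a B) ψ fun x hx y hy => by
    by_cases hxB : x ∈ B <;> by_cases hyB : y ∈ B
    · simp [ψ, hxB, hyB]
    · obtain rfl := (Finset.mem_insert.mp hy).resolve_right hyB
      simp [ψ, hxB, hyB, dist_comm x, h x hxB]
    · obtain rfl := (Finset.mem_insert.mp hx).resolve_right hxB
      simp [ψ, hxB, hyB, h y hyB]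
    · obtain rfl := (Finset.mem_insert.mp hx).resolve_right hxB
      obtain rfl := (Finset.mem_insert.mp hy).resolve_right hyB
      simp
  refine ⟨g, fun b hb => by simp [hg b (Finset.mem_insert_of_mem hb), ψ, hb], ?_⟩
  rw [hg a (Finset.mem_insert_self a B)]
  by_cases haB : a ∈ B
  · have : a' = a := by simpa using h a haB
    simp [ψ, this]
  · simp [ψ, haB]

end IsUrysohnOne

theorem exists_indep_realisation (X : Type) [MetricSpace X] (hX : IsUrysohnOne X)
    (a : X) (B C : Finset X) (hBC : B ⊆ C) :
    ∃ a' : X, (∀ b ∈ B, dist a' b = dist a b) ∧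
      (∃ g : X ≃ᵢ X, (∀ b ∈ B, g b = b) ∧ g a = a') ∧
      Indep {a'} (↑B) (↑C) := by
  by_cases haB : a ∈ B
  · refine ⟨a, fun _ _ => rfl, ⟨IsometryEquiv.refl X, fun _ _ => rfl, rfl⟩, ?_⟩
    rintro x rfl c - -
    exact ⟨x, haB, by simp⟩
  obtain ⟨a', ha'⟩ := hX.exists_forall_dist_eq (isKatetovOn_freeDist hX.diam_le_one _)
    (fun c _ => freeDist_pos haB c) (fun c _ => freeDist_le_one c)
  have hB : Realises a' a B := fun b hb =>
    (ha' b (hBC hb)).trans (freeDist_eq_dist_of_mem hX.diam_le_one hb)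
  exact ⟨a', hB, hX.exists_isometryEquiv_of_realises hB,
    indep_of_forall_dist_eq_freeDist hB ha'⟩
end

section
/- Let X be a finite subset of U_1, let a be a point, and let e ≥ 0 with d(a,X) + e ≤ 1. Then there exists a point z ∈ U_1 with d(z,a) = e and d(z,x) = min(d(a,x) + e, 1) for all x ∈ X (the prolongation of the type of a over X by e), and moreover z is independent from X over a. -/
/-!
The prescribed distances `x ↦ min (d(a,x) + e) 1` form a Katětov function on the finite set
`{a} ∪ X`, so adjoining one point at those distances gives a finite metric space of diameter at
most 1. Universality embeds it in `U_1`, and homogeneity moves the embedded copy of `{a} ∪ X`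
back onto `{a} ∪ X`; the image of the new point is `z`. Whenever `d(z,x) < 1` the minimum is
`d(a,x) + e = d(a,x) + d(z,a)`, which is the independence. For `e = 0` the point `a` itself works.
-/

open Function

section Katetov

variable {Y Z : Type*} [MetricSpace Y] [MetricSpace Z]

/-- The conditions under which `r y` can be the distance from `y` to a new point. -/
structure IsKatetov (r : Y → ℝ) : Prop where
  le_add_dist : ∀ y y', r y ≤ r y' + dist y y'
  dist_le_add : ∀ y y', dist y y' ≤ r y + r y'

theorem IsKatetov.comp {r : Y → ℝ} (hr : IsKatetov r) {f : Z → Y} (hf : Isometry f) :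
    IsKatetov (r ∘ f) where
  le_add_dist z z' := hf.dist_eq z z' ▸ hr.le_add_dist (f z) (f z')
  dist_le_add z z' := hf.dist_eq z z' ▸ hr.dist_le_add (f z) (f z')

/-- `none` is the new point, at distance `r y` from `y`. -/
def oneExtDist (r : Y → ℝ) : Option Y → Option Y → ℝ
  | some y, some y' => dist y y'
  | some y, none => r y
  | none, some y => r y
  | none, none => 0

noncomputable abbrev IsKatetov.optionMetricSpace {r : Y → ℝ} (hr : IsKatetov r)
    (hpos : ∀ y, 0 < r y) : MetricSpace (Option Y) where
  dist := oneExtDist r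
  dist_self := by rintro (_ | y) <;> simp [oneExtDist]
  dist_comm := by rintro (_ | y) (_ | y') <;> simp [oneExtDist, dist_comm]
  dist_triangle := by
    rintro (_ | x) (_ | y) (_ | z) <;> simp only [oneExtDist]
    · linarith
    · linarith
    · linarith [hpos y]
    · linarith [hr.le_add_dist z y, dist_comm y z]
    · linarith
    · exact hr.dist_le_add x z
    · linarith [hr.le_add_dist x y]
    · exact dist_triangle x y z
  eq_of_dist_eq_zero := by
    rintro (_ | y) (_ | y') h <;> simp only [oneExtDist] at h
    · rfl
    · exact absurd h (hpos y').ne'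
    · exact absurd h (hpos y).ne'
    · rw [dist_eq_zero.1 h]

theorem isKatetov_min_dist_add_one {a : Y} {e : ℝ} (he : 0 ≤ e)
    (hdiam : ∀ x y : Y, dist x y ≤ 1) : IsKatetov fun x => min (dist a x + e) 1 where
  le_add_dist x y := by
    have := dist_triangle a y x
    rw [dist_comm y x] at this
    rcases le_total (dist a y + e) 1 with h | h
    · rw [min_eq_left h]
      exact (min_le_left _ _).trans (by linarith : dist a x + e ≤ _)
    · rw [min_eq_right h]
      exact (min_le_right _ _).trans (le_add_of_nonneg_right dist_nonneg)
  dist_le_add x y := by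
    have := dist_triangle_left x y a
    rcases le_total (dist a x + e) 1 with hx | hx <;>
      rcases le_total (dist a y + e) 1 with hy | hy <;>
      simp only [min_eq_left, min_eq_right, hx, hy] <;>
      linarith [hdiam x y, dist_nonneg (x := a) (y := x), dist_nonneg (x := a) (y := y)]

end Katetov

section Urysohn

variable {X : Type} [MetricSpace X]

theorem IsUrysohnOne.exists_isometryEquiv_apply_eq (hX : IsUrysohnOne X) {ι : Type*}
    [Finite ι] (u v : ι → X) (h : ∀ i j, dist (v i) (v j) = dist (u i) (u j)) :
    ∃ g : X ≃ᵢ X, ∀ i, g (u i) = v i := by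
  classical
  have hfac : FactorsThrough v u := fun i j hij => dist_eq_zero.1 (by rw [h, hij, dist_self])
  obtain ⟨g, hg⟩ := hX.homogeneous (Set.finite_range u).toFinset (extend u v id) (by
    simp only [Set.Finite.mem_toFinset, Set.forall_mem_range, hfac.extend_apply]
    exact h)
  exact ⟨g, fun i => by rw [hg _ (by simp), hfac.extend_apply]⟩

theorem IsUrysohnOne.exists_dist_eq_of_isKatetov (hX : IsUrysohnOne X) (T : Finset X)
    {r : T → ℝ} (hr : IsKatetov r) (hpos : ∀ t, 0 < r t) (hle : ∀ t, r t ≤ 1) :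
    ∃ z : X, ∀ t : T, dist z t = r t := by
  let := hr.optionMetricSpace hpos
  obtain ⟨φ, hφ⟩ := hX.universal (Option T) <| by
    rintro (_ | s) (_ | t)
    exacts [zero_le_one, hle t, hle s, hX.diam_le_one s t]
  obtain ⟨g, hg⟩ := hX.exists_isometryEquiv_apply_eq (fun t : T => φ (some t)) Subtype.val
    fun s t => (hφ.dist_eq (some s) (some t)).symm
  exact ⟨g (φ none), fun t => by rw [← hg t, g.isometry.dist_eq, hφ.dist_eq]; rfl⟩

theorem IsUrysohnOne.exists_dist_eq_min (hX : IsUrysohnOne X) (T : Finset X) (a : X)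
    {e : ℝ} (he : 0 ≤ e) (he1 : e ≤ 1) :
    ∃ z : X, dist z a = e ∧ ∀ x ∈ T, dist z x = min (dist a x + e) 1 := by
  classical
  rcases he.eq_or_lt with rfl | hepos
  · exact ⟨a, dist_self a, fun x _ => by rw [add_zero, min_eq_left (hX.diam_le_one a x)]⟩
  obtain ⟨z, hz⟩ := hX.exists_dist_eq_of_isKatetov (insert a T)
    ((isKatetov_min_dist_add_one he hX.diam_le_one).comp isometry_subtype_coe)
    (fun _ => lt_min (by positivity) one_pos) (fun _ => min_le_right _ _)
  have hzT : ∀ x ∈ insert a T, dist z x = min (dist a x + e) 1 := fun x hx => hz ⟨x, hx⟩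
  refine ⟨z, ?_, fun x hx => hzT x (Finset.mem_insert_of_mem hx)⟩
  rw [hzT a (Finset.mem_insert_self a T), dist_self, zero_add, min_eq_left he1]

theorem indep_singleton_iff {z a : X} {C : Set X} :
    Indep {z} {a} C ↔ ∀ x ∈ C, dist z x < 1 → dist z x = dist z a + dist a x := by
  simp [Indep]

theorem indep_of_dist_eq_min {z a : X} {C : Set X} {e : ℝ} (hza : dist z a = e)
    (hz : ∀ x ∈ C, dist z x = min (dist a x + e) 1) : Indep {z} {a} C := by
  refine indep_singleton_iff.2 fun x hx hlt => ?_
  rw [hz x hx] at hlt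
  have hsum : dist a x + e < 1 := by simpa using hlt
  rw [hz x hx, min_eq_left hsum.le, hza, add_comm]

theorem typeDist_nonneg (a : X) (S : Finset X) (hS : S.Nonempty) : 0 ≤ typeDist a S hS :=
  Finset.le_inf' hS _ fun _ _ => dist_nonneg

end Urysohn

theorem exists_prolongation (X : Type) [MetricSpace X] (hX : IsUrysohnOne X)
    (S : Finset X) (hS : S.Nonempty) (a : X) (e : ℝ) (he : 0 ≤ e)
    (hle : typeDist a S hS + e ≤ 1) :
    ∃ z : X, dist z a = e ∧ (∀ x ∈ S, dist z x = min (dist a x + e) 1) ∧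
      Indep {z} {a} (↑S) := by
  have he1 : e ≤ 1 := (le_add_of_nonneg_left (typeDist_nonneg a S hS)).trans hle
  obtain ⟨z, hza, hz⟩ := hX.exists_dist_eq_min S a he he1
  exact ⟨z, hza, hz, indep_of_dist_eq_min hza hz⟩
end

section
/- Let a, b be points of U_1 with d(a,b) = 1, let k > 0, and let m be an integer with m·k ≥ 1. Then there exist points a_0 = a, a_1, ..., a_m = b in U_1 with d(a_{i−1}, a_i) = k for all i = 1,...,m. -/
/-!
Put the points `0, k, 2k, …, mk` of `ℝ` on a path and truncate their distances at `1`. This is a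
finite metric space of diameter at most `1` in which consecutive points are at distance `k` and
the endpoints at distance `min (mk) 1 = 1`. Universality embeds it in `U₁`, and homogeneity then
moves the images of the endpoints onto `a` and `b`.
-/

theorem min_one_le_add_of_le_add {x y z : ℝ} (hx : 0 ≤ x) (hy : 0 ≤ y) (h : z ≤ x + y) :
    min z 1 ≤ min x 1 + min y 1 := by
  rcases le_total x 1 with hx1 | hx1 <;> rcases le_total y 1 with hy1 | hy1 <;>
    simp only [min_eq_left, min_eq_right, hx1, hy1] <;>
    linarith [min_le_left z 1, min_le_right z 1]

/-- A type synonym carrying the metric `min (dist x y) 1`. -/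
def Truncated (α : Type*) : Type _ := α

namespace Truncated

variable {α : Type*}

def of : α ≃ Truncated α := Equiv.refl α

instance [Finite α] : Finite (Truncated α) := ‹Finite α›

noncomputable instance [MetricSpace α] : MetricSpace (Truncated α) where
  dist x y := min (dist (of.symm x) (of.symm y)) 1
  dist_self x := by simp
  dist_comm x y := by rw [dist_comm]
  dist_triangle x y z := min_one_le_add_of_le_add dist_nonneg dist_nonneg (dist_triangle _ _ _)
  eq_of_dist_eq_zero {x y} h := by
    rcases min_eq_iff.mp h with ⟨h, -⟩ | ⟨h, -⟩
    · exact of.symm.injective (dist_eq_zero.mp h)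
    · exact absurd h one_ne_zero

variable [MetricSpace α]

theorem dist_of (x y : α) : dist (of x) (of y) = min (dist x y) 1 := rfl

theorem dist_le_one (x y : Truncated α) : dist x y ≤ 1 := min_le_right _ _

end Truncated

theorem IsUrysohnOne.exists_isometry_apply_eq_apply_eq {X : Type} [MetricSpace X]
    (hX : IsUrysohnOne X) {Y : Type} [MetricSpace Y] [Finite Y] (hY : ∀ y z : Y, dist y z ≤ 1)
    {y₀ y₁ : Y} {a b : X} (hab : dist a b = dist y₀ y₁) :
    ∃ f : Y → X, Isometry f ∧ f y₀ = a ∧ f y₁ = b := by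
  classical
  obtain ⟨e, he⟩ := hX.universal Y hY
  let t : X → X := fun x => if x = e y₀ then a else b
  have ht₀ : t (e y₀) = a := if_pos rfl
  have ht₁ : t (e y₁) = b := by
    by_cases h : e y₁ = e y₀
    · rw [he.injective h, dist_self, dist_eq_zero] at hab
      simp [t, h, hab]
    · exact if_neg h
  have ht : ∀ x ∈ ({e y₀, e y₁} : Finset X), ∀ x' ∈ ({e y₀, e y₁} : Finset X),
      dist (t x) (t x') = dist x x' := by
    simp only [Finset.mem_insert, Finset.mem_singleton]
    rintro x (rfl | rfl) x' (rfl | rfl) <;>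
      simp only [ht₀, ht₁, dist_self, he.dist_eq, hab, dist_comm b a, dist_comm y₁ y₀]
  obtain ⟨g, hg⟩ := hX.homogeneous _ t ht
  exact ⟨g ∘ e, g.isometry.comp he, (hg _ (by simp)).trans ht₀, (hg _ (by simp)).trans ht₁⟩

theorem exists_path_of_steps_general (X : Type) [MetricSpace X] (hX : IsUrysohnOne X)
    (a b : X) (hab : dist a b = 1) (k : ℝ) (hk1 : k ≤ 1)
    (m : ℕ) (hm : 1 ≤ (m : ℝ) * k) :
    ∃ f : Fin (m + 1) → X, f 0 = a ∧ f (Fin.last m) = b ∧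
      ∀ i : Fin m, dist (f i.castSucc) (f i.succ) = k := by
  have hk : 0 ≤ k := (pos_of_mul_pos_right (by linarith) m.cast_nonneg).le
  let y : Fin (m + 1) → Truncated (Set.range fun i : Fin (m + 1) => (i : ℝ) * k) :=
    fun i => Truncated.of ⟨i * k, i, rfl⟩
  have hy : ∀ i j, dist (y i) (y j) = min |(i : ℝ) * k - j * k| 1 :=
    fun _ _ => Truncated.dist_of _ _
  obtain ⟨f, hf, hf₀, hfm⟩ := hX.exists_isometry_apply_eq_apply_eq Truncated.dist_le_one
    (y₀ := y 0) (y₁ := y (Fin.last m)) <| by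
      rw [hab, hy, Fin.val_zero, Fin.val_last, Nat.cast_zero, zero_mul, zero_sub, abs_neg,
        abs_of_nonneg (by positivity), min_eq_right hm]
  refine ⟨f ∘ y, hf₀, hfm, fun i => ?_⟩
  rw [Function.comp_apply, Function.comp_apply, hf.dist_eq, hy, Fin.val_castSucc, Fin.val_succ,
    Nat.cast_succ, ← sub_mul, sub_add_cancel_left, neg_one_mul, abs_neg, abs_of_nonneg hk,
    min_eq_left hk1]

theorem exists_path_of_steps (X : Type) [MetricSpace X] (hX : IsUrysohnOne X)
    (a b : X) (hab : dist a b = 1) (k : ℝ) (hk : 0 < k) (hk1 : k ≤ 1)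
    (m : ℕ) (hm : 1 ≤ (m : ℝ) * k) :
    ∃ f : Fin (m + 1) → X, f 0 = a ∧ f (Fin.last m) = b ∧
      ∀ i : Fin m, dist (f i.castSucc) (f i.succ) = k :=
  exists_path_of_steps_general X hX a b hab k hk1 m hm
end
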